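/- arXiv:0711.2922 — 4 statements merged into one kernel-verified Lean document; each statement's English description precedes it below -/
import Mathlib

section
/- If L is a (finite) Kuratowski linear ordering, then the cardinality of L equals the cardinality of its field ⋃L. -/
/-!
Since `⋃₀ L` is finite, `L` is a chain of finite sets, on which `Set.ncard` is injective.
The cardinalities of the members of `L` start at `1` (the singleton) and, by (iii), go up
one at a time until they reach `(⋃₀ L).ncard`, so they fill exactly `[1, (⋃₀ L).ncard]`.
-/

/-- `L` is a Kuratowski linear ordering: a finite family of sets such that
(i) `∅ ∉ L`; (ii) if `L` is nonempty it contains a singleton; (iii) every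
member is either the union `⋃₀ L` or extends to another member by one point
of `⋃₀ L`; (iv) any two members are comparable under inclusion. -/
def IsKuratowskiLO {α : Type*} (L : Set (Set α)) : Prop :=
  L.Finite ∧
  ∅ ∉ L ∧
  (L.Nonempty → ∃ a : α, {a} ∈ L) ∧
  (∀ x ∈ L, x = ⋃₀ L ∨ ∃ y ∈ ⋃₀ L, y ∉ x ∧ x ∪ {y} ∈ L) ∧
  (∀ x ∈ L, ∀ y ∈ L, x ⊆ y ∨ y ⊆ x)

theorem Set.injOn_ncard_of_isChain {α : Type*} {C : Set (Set α)}
    (hC : IsChain (· ⊆ ·) C) (hfin : ∀ s ∈ C, s.Finite) : Set.InjOn Set.ncard C := by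
  intro s hs t ht hst
  rcases hC.total hs ht with h | h
  · exact Set.eq_of_subset_of_ncard_le h hst.ge (hfin t ht)
  · exact (Set.eq_of_subset_of_ncard_le h hst.le (hfin s hs)).symm

namespace IsKuratowskiLO

variable {α : Type*} {L : Set (Set α)}

/-- A finite member of maximal cardinality cannot be extended by (iii), so it is `⋃₀ L`. -/
theorem finite_sUnion (hL : IsKuratowskiLO L) : (⋃₀ L).Finite := by
  obtain ⟨hfin, -, hsingleton, hstep, -⟩ := hL
  rcases L.eq_empty_or_nonempty with rfl | hne
  · simp
  obtain ⟨a, ha⟩ := hsingleton hne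
  obtain ⟨x, ⟨hxL, hxfin⟩, hxmax⟩ := Set.exists_max_image {x ∈ L | x.Finite} Set.ncard
    (hfin.subset (Set.sep_subset _ _)) ⟨{a}, ha, Set.finite_singleton a⟩
  rcases hstep x hxL with hx | ⟨y, -, hyx, hxy⟩
  · rwa [← hx]
  · have hle := hxmax (x ∪ {y}) ⟨hxy, hxfin.union (Set.finite_singleton y)⟩
    rw [Set.union_singleton, Set.ncard_insert_of_notMem hyx hxfin] at hle
    omega

theorem finite_of_mem (hL : IsKuratowskiLO L) {x : Set α} (hx : x ∈ L) : x.Finite :=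
  hL.finite_sUnion.subset (Set.subset_sUnion_of_mem hx)

theorem injOn_ncard (hL : IsKuratowskiLO L) : Set.InjOn Set.ncard L :=
  Set.injOn_ncard_of_isChain (fun x hx y hy _ => hL.2.2.2.2 x hx y hy)
    fun _ => hL.finite_of_mem

theorem ncard_image_eq_Icc (hL : IsKuratowskiLO L) (hne : L.Nonempty) :
    Set.ncard '' L = Set.Icc 1 (⋃₀ L).ncard := by
  ext k
  constructor
  · rintro ⟨x, hx, rfl⟩
    have hx_ne : x.Nonempty := Set.nonempty_iff_ne_empty.2 fun h => hL.2.1 (h ▸ hx)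
    exact ⟨(Set.ncard_pos (hL.finite_of_mem hx)).2 hx_ne,
      Set.ncard_le_ncard (Set.subset_sUnion_of_mem hx) hL.finite_sUnion⟩
  · rintro ⟨hk1, hk⟩
    induction k, hk1 using Nat.le_induction with
    | base =>
      obtain ⟨a, ha⟩ := hL.2.2.1 hne
      exact ⟨{a}, ha, Set.ncard_singleton a⟩
    | succ k _ ih =>
      obtain ⟨x, hx, rfl⟩ := ih (by omega)
      rcases hL.2.2.2.1 x hx with rfl | ⟨y, -, hyx, hxy⟩
      · omega
      · refine ⟨x ∪ {y}, hxy, ?_⟩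
        rw [Set.union_singleton, Set.ncard_insert_of_notMem hyx (hL.finite_of_mem hx)]

end IsKuratowskiLO

/-- A Kuratowski linear ordering has the same cardinality as its field `⋃₀ L`. -/
theorem kuratowskiLO_ncard_field {α : Type*} (L : Set (Set α))
    (hL : IsKuratowskiLO L) :
    L.ncard = (⋃₀ L).ncard := by
  rcases L.eq_empty_or_nonempty with rfl | hne
  · simp
  rw [← hL.injOn_ncard.ncard_image, hL.ncard_image_eq_Icc hne, Set.ncard_Icc_nat]
  omega
end

section
/- A Kuratowski linear ordering L₁ is an initial segment of a Kuratowski linear ordering L₂ if and only if L₁ ⊆ L₂. -/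
/-- The strict order on the field of a Kuratowski linear ordering:
`a <_L b` iff some member of `L` contains `a` but not `b`. -/
def KurLt {α : Type*} (L : Set (Set α)) (a b : α) : Prop :=
  ∃ x ∈ L, a ∈ x ∧ b ∉ x

/-- `L₁` is an initial segment of `L₂`: `L₁` is a Kuratowski linear ordering,
its field is contained in that of `L₂`, its order is the restriction of the
order of `L₂`, and its field is downward closed under `<_{L₂}`. -/
def IsInitialSegment {α : Type*} (L₁ L₂ : Set (Set α)) : Prop :=
  IsKuratowskiLO L₁ ∧
  ⋃₀ L₁ ⊆ ⋃₀ L₂ ∧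
  (∀ a ∈ ⋃₀ L₁, ∀ b ∈ ⋃₀ L₁, (KurLt L₁ a b ↔ KurLt L₂ a b)) ∧
  (∀ a ∈ ⋃₀ L₁, ∀ b, KurLt L₂ b a → b ∈ ⋃₀ L₁)

/-!
Every point `c` of the field of a Kuratowski linear ordering `L` lies in a member of `L` all of
whose other points are `<_L c`: add `c` to the largest member missing it (or take the first
singleton). Hence `<_L` is total on the field, and since `L` is a chain, the members of `L` are
exactly the nonempty `<_L`-downward closed subsets of the field (such a set is the union of
these intervals, and a finite chain has a largest element).

If `L₁ ⊆ L₂`, then `<_{L₁} ⊆ <_{L₂}` with the first total and the second asymmetric, so they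
agree on `Field(L₁)`. Conversely, if `L₁` is an initial segment of `L₂`, each member of `L₁` is a
nonempty `<_{L₂}`-downward closed subset of `Field(L₂)`, hence a member of `L₂`.
-/

section

variable {α : Type*} {L L' L₁ L₂ : Set (Set α)} {x : Set α} {a b c d : α}

theorem KurLt.mono (hab : KurLt L a b) (hL : L ⊆ L') : KurLt L' a b :=
  let ⟨x, hx, hax, hbx⟩ := hab
  ⟨x, hL hx, hax, hbx⟩

theorem KurLt.ne (hab : KurLt L a b) : a ≠ b := by
  rintro rfl
  obtain ⟨x, -, hax, hbx⟩ := hab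
  exact hbx hax

theorem IsChain.mem_of_kurLt (hL : IsChain (· ⊆ ·) L) (hx : x ∈ L) (hc : c ∈ x)
    (hdc : KurLt L d c) : d ∈ x := by
  obtain ⟨z, hz, hdz, hcz⟩ := hdc
  rcases hL.total hx hz with hxz | hzx
  · exact absurd (hxz hc) hcz
  · exact hzx hdz

theorem KurLt.not_kurLt_of_isChain (hL : IsChain (· ⊆ ·) L) (hab : KurLt L a b) : ¬ KurLt L b a :=
  let ⟨_, hx, hax, hbx⟩ := hab
  fun hba => hbx (hL.mem_of_kurLt hx hax hba)

namespace IsKuratowskiLO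

theorem isChain (h : IsKuratowskiLO L) : IsChain (· ⊆ ·) L :=
  fun x hx y hy _ => h.2.2.2.2 x hx y hy

theorem exists_mem_forall_kurLt (h : IsKuratowskiLO L) (hc : c ∈ ⋃₀ L) :
    ∃ x ∈ L, c ∈ x ∧ ∀ d ∈ x, d ≠ c → KurLt L d c := by
  obtain ⟨hfin, -, hsingle, hsucc, -⟩ := h
  by_cases hmiss : ∃ t ∈ L, c ∉ t
  · obtain ⟨t, ht⟩ := (hfin.subset (Set.sep_subset L (c ∉ ·))).exists_maximal hmiss
    obtain ⟨htL, hct⟩ := ht.prop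
    rcases hsucc t htL with htop | ⟨y, -, hyt, hty⟩
    · exact absurd (htop ▸ hc) hct
    obtain rfl : c = y := by
      by_contra hcy
      refine ht.not_ssuperset ⟨hty, by simp [hct, hcy]⟩ ?_
      rw [Set.union_singleton]
      exact Set.ssubset_insert hyt
    exact ⟨t ∪ {c}, hty, Or.inr rfl, fun d hd hdc => ⟨t, htL, hd.resolve_right hdc, hct⟩⟩
  · obtain ⟨x, hxL, -⟩ := hc
    obtain ⟨a, ha⟩ := hsingle ⟨x, hxL⟩
    obtain rfl : c = a := not_not.mp fun hca => hmiss ⟨_, ha, hca⟩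
    exact ⟨{c}, ha, rfl, fun d hd hdc => absurd hd hdc⟩

theorem kurLt_or_kurLt (h : IsKuratowskiLO L) (ha : a ∈ ⋃₀ L) (hab : a ≠ b) :
    KurLt L a b ∨ KurLt L b a := by
  obtain ⟨x, hxL, hax, hx⟩ := h.exists_mem_forall_kurLt ha
  by_cases hbx : b ∈ x
  · exact Or.inr (hx b hbx hab.symm)
  · exact Or.inl ⟨x, hxL, hax, hbx⟩

theorem mem_of_downwardClosed (h : IsKuratowskiLO L) {D : Set α} (hD : D.Nonempty)
    (hDL : D ⊆ ⋃₀ L) (hdown : ∀ c ∈ D, ∀ d, KurLt L d c → d ∈ D) : D ∈ L := by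
  have hinterval : ∀ c ∈ D, ∃ x ∈ L, c ∈ x ∧ x ⊆ D := fun c hc => by
    obtain ⟨x, hxL, hcx, hx⟩ := h.exists_mem_forall_kurLt (hDL hc)
    refine ⟨x, hxL, hcx, fun d hd => ?_⟩
    by_cases hdc : d = c
    · exact hdc ▸ hc
    · exact hdown c hc d (hx d hd hdc)
  obtain ⟨c₀, hc₀⟩ := hD
  obtain ⟨x₀, hx₀L, -, hx₀D⟩ := hinterval c₀ hc₀
  obtain ⟨m, hm⟩ :=
    (h.1.subset (Set.sep_subset L (· ⊆ D))).exists_maximal ⟨x₀, hx₀L, hx₀D⟩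
  obtain ⟨hmL, hmD⟩ := hm.prop
  suffices D ⊆ m from (hmD.antisymm this) ▸ hmL
  intro c hc
  obtain ⟨x, hxL, hcx, hxD⟩ := hinterval c hc
  rcases h.isChain.total hxL hmL with hxm | hmx
  · exact hxm hcx
  · exact hm.eq_of_subset ⟨hxL, hxD⟩ hmx ▸ hcx

end IsKuratowskiLO

theorem IsInitialSegment.subset (h : IsInitialSegment L₁ L₂) (h₂ : IsKuratowskiLO L₂) :
    L₁ ⊆ L₂ := by
  obtain ⟨h₁, hfield, hord, hdown⟩ := h
  intro x hx
  have hx₁ : x ⊆ ⋃₀ L₁ := Set.subset_sUnion_of_mem hx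
  refine h₂.mem_of_downwardClosed (Set.nonempty_iff_ne_empty.mpr fun he => h₁.2.1 (he ▸ hx))
    (hx₁.trans hfield) fun c hc d hdc => ?_
  have hd₁ : d ∈ ⋃₀ L₁ := hdown c (hx₁ hc) d hdc
  exact h₁.isChain.mem_of_kurLt hx hc ((hord d hd₁ c (hx₁ hc)).mpr hdc)

theorem isInitialSegment_of_subset (h₁ : IsKuratowskiLO L₁) (h₂ : IsKuratowskiLO L₂)
    (hsub : L₁ ⊆ L₂) : IsInitialSegment L₁ L₂ := by
  refine ⟨h₁, Set.sUnion_mono hsub, fun a ha b _ => ⟨(·.mono hsub), fun hab => ?_⟩, ?_⟩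
  · refine (h₁.kurLt_or_kurLt ha hab.ne).resolve_right fun hba => ?_
    exact hab.not_kurLt_of_isChain h₂.isChain (hba.mono hsub)
  · rintro a ⟨s, hs, has⟩ b hba
    exact ⟨s, hs, h₂.isChain.mem_of_kurLt (hsub hs) has hba⟩

end

/-- For Kuratowski linear orderings, being an initial segment coincides with
set inclusion. -/
theorem kuratowskiLO_initialSegment_iff_subset {α : Type*} (L₁ L₂ : Set (Set α))
    (h₁ : IsKuratowskiLO L₁) (h₂ : IsKuratowskiLO L₂) :
    IsInitialSegment L₁ L₂ ↔ L₁ ⊆ L₂ :=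
  ⟨fun h => h.subset h₂, isInitialSegment_of_subset h₁ h₂⟩
end

section
/- Let v be a von Neumann natural number (a hereditarily finite set with v = {0, 1, ..., n−1} where each k is the von Neumann numeral) and z be a Zermelo numeral (z = σ^m(∅) where σ(x) = {x}). Then TC({v}) ∩ TC({z}) ⊆ {∅, {∅}}, where TC denotes transitive closure. -/
open ZFSet

/-- The `n`-th von Neumann numeral: `0 = ∅`, `S x = x ∪ {x}`. -/
def vonNeumann : ℕ → ZFSet
  | 0 => ∅
  | n + 1 => insert (vonNeumann n) (vonNeumann n)

/-- The `n`-th Zermelo numeral: `0 = ∅`, `σ x = {x}`. -/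
def zermelo : ℕ → ZFSet
  | 0 => ∅
  | n + 1 => {zermelo n}

/-- The `n`-fold iterated union of a set. -/
def iterUnion : ℕ → ZFSet → ZFSet
  | 0, A => A
  | n + 1, A => ⋃₀ iterUnion n A

/-- The transitive closure of `A`: the smallest transitive set containing all
elements of `A` (so `TClos {a}` consists of `a` together with all members of
members of … of `a`). -/
noncomputable def TClos (A : ZFSet) : ZFSet :=
  ⋃₀ ZFSet.range fun n : ℕ => iterUnion n A

/-!
Every member of `TC({v})` is again a von Neumann numeral and every member of `TC({z})` a Zermelo
numeral. A Zermelo numeral has at most one element, while the von Neumann numeral `i ≥ 2` contains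
the two distinct sets `∅` and `{∅}`; so a common member is `∅` or `{∅}`.

`_root_.vonNeumann` is written out because `open ZFSet` also brings the hierarchy
`ZFSet.vonNeumann` (`V_`) into scope.
-/

section Induction

variable {p : ZFSet → Prop} {A : ZFSet}

theorem iterUnion_induction (hA : ∀ x ∈ A, p x) (hmem : ∀ x, p x → ∀ y ∈ x, p y) :
    ∀ (k : ℕ), ∀ x ∈ iterUnion k A, p x
  | 0 => hA
  | k + 1 => fun y hy => by
    obtain ⟨x, hx, hyx⟩ := mem_sUnion.mp hy
    exact hmem x (iterUnion_induction hA hmem k x hx) y hyx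

theorem TClos_induction (hA : ∀ x ∈ A, p x) (hmem : ∀ x, p x → ∀ y ∈ x, p y) :
    ∀ x ∈ TClos A, p x := by
  intro x hx
  obtain ⟨_, ⟨k, rfl⟩, hxk⟩ := by simpa only [TClos, mem_sUnion, mem_range] using hx
  exact iterUnion_induction hA hmem k x hxk

end Induction

theorem mem_vonNeumann_iff_exists {x : ZFSet} {k : ℕ} :
    x ∈ _root_.vonNeumann k ↔ ∃ i < k, x = _root_.vonNeumann i := by
  induction k with
  | zero => simp [_root_.vonNeumann]
  | succ k ih =>
    simp only [_root_.vonNeumann, mem_insert_iff, ih, Nat.lt_succ_iff_lt_or_eq]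
    grind

theorem exists_zermelo_of_mem_zermelo {x : ZFSet} {k : ℕ} (h : x ∈ zermelo k) :
    ∃ i, x = zermelo i := by
  cases k with
  | zero => simp [zermelo] at h
  | succ k => exact ⟨k, mem_singleton.mp h⟩

theorem exists_vonNeumann_of_mem_TClos {n : ℕ} {x : ZFSet}
    (hx : x ∈ TClos {_root_.vonNeumann n}) :
    ∃ i, x = _root_.vonNeumann i := by
  refine TClos_induction (p := fun x => ∃ i, x = _root_.vonNeumann i) ?_ ?_ x hx
  · exact fun x hx => ⟨n, mem_singleton.mp hx⟩
  · rintro _ ⟨i, rfl⟩ y hy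
    obtain ⟨j, -, rfl⟩ := mem_vonNeumann_iff_exists.mp hy
    exact ⟨j, rfl⟩

theorem exists_zermelo_of_mem_TClos {m : ℕ} {x : ZFSet} (hx : x ∈ TClos {zermelo m}) :
    ∃ j, x = zermelo j := by
  refine TClos_induction (p := fun x => ∃ j, x = zermelo j) ?_ ?_ x hx
  · exact fun x hx => ⟨m, mem_singleton.mp hx⟩
  · rintro _ ⟨j, rfl⟩ y hy
    exact exists_zermelo_of_mem_zermelo hy

theorem eq_of_mem_zermelo {x y : ZFSet} {k : ℕ} (hx : x ∈ zermelo k) (hy : y ∈ zermelo k) :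
    x = y := by
  cases k with
  | zero => simp [zermelo] at hx
  | succ k => exact (mem_singleton.mp hx).trans (mem_singleton.mp hy).symm

theorem vonNeumann_zero_ne_one : _root_.vonNeumann 0 ≠ _root_.vonNeumann 1 := by
  intro h
  have h01 : _root_.vonNeumann 0 ∈ _root_.vonNeumann 1 := mem_insert _ _
  rw [← h] at h01
  exact mem_irrefl _ h01

theorem le_one_of_vonNeumann_eq_zermelo {i j : ℕ} (h : _root_.vonNeumann i = zermelo j) :
    i ≤ 1 := by
  by_contra! hi
  have h0 : _root_.vonNeumann 0 ∈ zermelo j :=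
    h ▸ mem_vonNeumann_iff_exists.mpr ⟨0, by omega, rfl⟩
  have h1 : _root_.vonNeumann 1 ∈ zermelo j :=
    h ▸ mem_vonNeumann_iff_exists.mpr ⟨1, hi, rfl⟩
  exact vonNeumann_zero_ne_one (eq_of_mem_zermelo h0 h1)

theorem vonNeumann_mem_pair_of_le_one {i : ℕ} (hi : i ≤ 1) :
    _root_.vonNeumann i ∈ ({∅, {∅}} : ZFSet) := by
  interval_cases i <;> simp [_root_.vonNeumann]

/-- Base case of the VN–Z Splitting Lemma: if `v` is a von Neumann numeral
and `z` is a Zermelo numeral, then `TC({v}) ∩ TC({z}) ⊆ {∅, {∅}}`. -/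
theorem vn_z_splitting_base (n m : ℕ) :
    TClos {_root_.vonNeumann n} ∩ TClos {zermelo m} ⊆ ({∅, {∅}} : ZFSet) := by
  intro x hx
  obtain ⟨hv, hz⟩ := mem_inter.mp hx
  obtain ⟨i, rfl⟩ := exists_vonNeumann_of_mem_TClos hv
  obtain ⟨j, hj⟩ := exists_zermelo_of_mem_TClos hz
  exact vonNeumann_mem_pair_of_le_one (le_one_of_vonNeumann_eq_zermelo hj)
end

section
/- For natural numbers under the constraints n ≥ 1 and K ≥ 1: if ψ : ℕ → ℕ satisfies ⌊ψ(x^n)^{1/n}⌋ < K·x for all x ≥ 1 (where y^{1/n} means the least z with y ≤ zⁿ, i.e., the ceiling n-th root), and ψ is monotone increasing, then ψ(x) < (K+1)^n · n · n! · x for all x ≥ 1. -/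
/-- The ceiling `n`-th root of `y`: the least `z` with `y ≤ z^n`. -/
noncomputable def ceilRoot (n y : ℕ) : ℕ := sInf {z : ℕ | y ≤ z ^ n}

lemma ceilRoot_le_pow (n y : ℕ) (hn : 1 ≤ n) : y ≤ (ceilRoot n y) ^ n := by
  have hmem : y ∈ {z : ℕ | y ≤ z ^ n} := Nat.le_self_pow (by omega) y
  exact Nat.sInf_mem ⟨y, hmem⟩

lemma ceilRoot_le (n y z : ℕ) (h : y ≤ z ^ n) : ceilRoot n y ≤ z := Nat.sInf_le h

lemma two_pow_le_mul_factorial (n : ℕ) (hn : 2 ≤ n) : 2 ^ n ≤ n * n.factorial := by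
  induction n with
  | zero => omega
  | succ m ih =>
    rcases Nat.lt_or_ge m 2 with hm | hm
    · interval_cases m <;> simp [Nat.factorial] <;> omega
    · have ihm := ih hm
      have hfac : (m + 1) * (m + 1).factorial = (m + 1) * ((m + 1) * m.factorial) := by
        simp [Nat.factorial]
      have h2 : 2 ^ (m + 1) = 2 * 2 ^ m := by ring
      have hq : 2 * m ≤ (m + 1) * (m + 1) := by nlinarith
      have : 2 * (m * m.factorial) ≤ (m + 1) * ((m + 1) * m.factorial) := by
        calc 2 * (m * m.factorial) = (2 * m) * m.factorial := by ring
          _ ≤ ((m + 1) * (m + 1)) * m.factorial := Nat.mul_le_mul_right _ hq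
          _ = (m + 1) * ((m + 1) * m.factorial) := by ring
      omega

/-- If `ψ` is monotone and `⌈ψ(xⁿ)^{1/n}⌉ < K·x` for all `x ≥ 1`, then
`ψ(x) < (K+1)ⁿ · n · n! · x` for all `x ≥ 1`. -/
theorem growth_bound_of_root_bound (n K : ℕ) (hn : 1 ≤ n) (hK : 1 ≤ K)
    (ψ : ℕ → ℕ) (hmono : Monotone ψ)
    (hroot : ∀ x : ℕ, 1 ≤ x → ceilRoot n (ψ (x ^ n)) < K * x) :
    ∀ x : ℕ, 1 ≤ x → ψ x < (K + 1) ^ n * n * n.factorial * x := by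
  intro x hx
  set r := ceilRoot n x with hrdef
  have hxr : x ≤ r ^ n := ceilRoot_le_pow n x hn
  have hr1 : 1 ≤ r := by
    rcases Nat.eq_zero_or_pos r with h0 | h
    · rw [h0, zero_pow (by omega)] at hxr; omega
    · exact h
  -- key arithmetic bound: r ^ n ≤ n * n! * x
  have key : r ^ n ≤ n * n.factorial * x := by
    rcases eq_or_lt_of_le hn with h1 | h2
    · -- n = 1
      have hn1 : n = 1 := h1.symm
      have : r ≤ x := ceilRoot_le n x x (Nat.le_self_pow (by omega) x)
      simp [hn1, Nat.factorial]
      omega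
    · -- n ≥ 2
      rcases eq_or_lt_of_le hr1 with hr' | hr'
      · -- r = 1
        have : r ^ n = 1 := by rw [← hr']; simp
        have h1 : 1 ≤ n * n.factorial * x :=
          Nat.one_le_iff_ne_zero.mpr (by positivity)
        omega
      · -- r ≥ 2; let m = r - 1, then m^n < x
        set m := r - 1 with hm
        have hm1 : 1 ≤ m := by omega
        have hmn : m ^ n < x := by
          by_contra h
          push_neg at h
          have := ceilRoot_le n x m h
          omega
        have hle : r ≤ 2 * m := by omega
        have h2m : r ^ n ≤ (2 * m) ^ n := Nat.pow_le_pow_left hle n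
        have h2p : (2 * m) ^ n = 2 ^ n * m ^ n := by rw [mul_pow]
        have h2f : 2 ^ n ≤ n * n.factorial := two_pow_le_mul_factorial n h2
        have hmx : m ^ n ≤ x := le_of_lt hmn
        calc r ^ n ≤ 2 ^ n * m ^ n := by rw [← h2p]; exact h2m
          _ ≤ (n * n.factorial) * m ^ n := Nat.mul_le_mul_right _ h2f
          _ ≤ n * n.factorial * x := Nat.mul_le_mul_left _ hmx
  -- chain of bounds on ψ
  have hψ1 : ψ x ≤ ψ (r ^ n) := hmono hxr
  have hψ2 : ψ (r ^ n) ≤ (ceilRoot n (ψ (r ^ n))) ^ n := ceilRoot_le_pow n _ hn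
  have hroot' := hroot r hr1
  have hKr : 1 ≤ K * r := Nat.one_le_iff_ne_zero.mpr (by positivity)
  have hle' : ceilRoot n (ψ (r ^ n)) ≤ K * r - 1 := by omega
  have hψ3 : (ceilRoot n (ψ (r ^ n))) ^ n ≤ (K * r - 1) ^ n := Nat.pow_le_pow_left hle' n
  have hψ4 : (K * r - 1) ^ n < (K * r) ^ n := Nat.pow_lt_pow_left (by omega) (by omega)
  have hψ5 : (K * r) ^ n = K ^ n * r ^ n := mul_pow K r n
  have hψ6 : K ^ n * r ^ n ≤ K ^ n * (n * n.factorial * x) := Nat.mul_le_mul_left _ key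
  have hψ7 : K ^ n ≤ (K + 1) ^ n := Nat.pow_le_pow_left (by omega) n
  calc ψ x ≤ ψ (r ^ n) := hψ1
    _ ≤ (ceilRoot n (ψ (r ^ n))) ^ n := hψ2
    _ ≤ (K * r - 1) ^ n := hψ3
    _ < (K * r) ^ n := hψ4
    _ = K ^ n * r ^ n := hψ5
    _ ≤ K ^ n * (n * n.factorial * x) := hψ6
    _ ≤ (K + 1) ^ n * (n * n.factorial * x) := Nat.mul_le_mul_right _ hψ7
    _ = (K + 1) ^ n * n * n.factorial * x := by ring
end
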